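/- Let n ≥ 2 and let 𝔮, q1 be invertible elements of a commutative ring. Define t*_λ := (−𝔮)^{−|λ|} · 𝔮^{−#{s∈λ : h_λ(s) ≡ 0 (mod n)}} · ∏_{(i,j)∈λ, j ≡ 0 (mod n)} (−𝔮 q1^{j}). If λ + 1_k is a Young diagram and ℓ ≡ k − λ_k − 1 (mod n), then t*_{λ+1_k} = t*_λ · (−𝔮^{−1}) · (−𝔮 q1^{λ_k+1})^{e} · ∏_{1≤s≤ℓ(λ), s−λ_s ≡ ℓ (mod n)} 𝔮 · ∏_{1≤s≤ℓ(λ)+1, s≠k, s−λ_s ≡ ℓ+1 (mod n)} 𝔮^{−1}, where e = 1 if λ_k + 1 ≡ 0 (mod n) and e = 0 otherwise. -/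

import Mathlib

open Finset

/-- characterization of rowLen -/
lemma rowLen_eq_of {μ : YoungDiagram} {i m : ℕ} (h : ∀ j, (i, j) ∈ μ ↔ j < m) :
    μ.rowLen i = m := by
  refine le_antisymm ?_ ?_
  · by_contra hc
    push_neg at hc
    have := (YoungDiagram.mem_iff_lt_rowLen.mpr hc : (i, m) ∈ μ)
    exact absurd ((h m).mp this) (lt_irrefl m)
  · rcases Nat.eq_zero_or_pos m with hm | hm
    · omega
    · have : (i, m - 1) ∈ μ := (h (m-1)).mpr (by omega)
      have := YoungDiagram.mem_iff_lt_rowLen.mp this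
      omega

lemma colLen_eq_of {μ : YoungDiagram} {j m : ℕ} (h : ∀ i, (i, j) ∈ μ ↔ i < m) :
    μ.colLen j = m := by
  refine le_antisymm ?_ ?_
  · by_contra hc
    push_neg at hc
    have := (YoungDiagram.mem_iff_lt_colLen.mpr hc : (m, j) ∈ μ)
    exact absurd ((h m).mp this) (lt_irrefl m)
  · rcases Nat.eq_zero_or_pos m with hm | hm
    · omega
    · have : (m - 1, j) ∈ μ := (h (m-1)).mpr (by omega)
      have := YoungDiagram.mem_iff_lt_colLen.mp this
      omega

/-- shift counting lemma -/
lemma count_shift (n m : ℕ) (r : ZMod n) :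
    ((range (m+1)).filter (fun x => ((x : ℕ) : ZMod n) = r + 1)).card
    = ((range m).filter (fun x => ((x : ℕ) : ZMod n) = r)).card
      + (if r + 1 = (0 : ZMod n) then 1 else 0) := by
  induction m with
  | zero =>
    simp only [range_one, range_zero, filter_empty, card_empty, zero_add]
    rw [filter_singleton]
    split_ifs with h1 h2 h2
    · simp
    · exact absurd (by rw [← h1]; push_cast; ring) h2
    · exact absurd (by rw [Nat.cast_zero]; exact h2.symm) h1
    · simp
  | succ m ih =>
    have hiff : (((m+1 : ℕ) : ZMod n) = r + 1) ↔ ((m : ℕ) : ZMod n) = r := by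
      constructor
      · intro h; have := congrArg (· - 1) h; push_cast at this ⊢; linear_combination this
      · intro h; push_cast; rw [h]
    rw [range_add_one, filter_insert]
    conv_rhs => rw [range_add_one, filter_insert]
    by_cases h2 : ((m : ℕ) : ZMod n) = r
    · rw [if_pos (hiff.mpr h2), if_pos h2, card_insert_of_notMem (by simp),
        card_insert_of_notMem (by simp)]
      omega
    · rw [if_neg (fun h => h2 (hiff.mp h)), if_neg h2]
      exact ih

/-- Single-row hook partition. -/
lemma row_hook_partition (lam : YoungDiagram) (k : ℕ) (hkD : k ≤ lam.colLen 0)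
    (p : ℕ → Prop) [DecidablePred p] :
    ((range (lam.rowLen k + (lam.colLen 0 - k))).filter p).card
    = ((range (lam.rowLen k)).filter
        (fun j => p (j + (lam.colLen 0 + 1 - lam.colLen j)))).card
      + ((Ioo k (lam.colLen 0 + 1)).filter
        (fun t => p (lam.rowLen t + (lam.colLen 0 - t)))).card := by
  set D := lam.colLen 0 with hD
  set c := lam.rowLen k with hc
  set g : ℕ → ℕ := fun j => j + (D + 1 - lam.colLen j) with hg
  set β : ℕ → ℕ := fun t => lam.rowLen t + (D - t) with hβ
  have hcol0 : ∀ j, lam.colLen j ≤ D := fun j => lam.colLen_anti 0 j (Nat.zero_le j)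
  have hcolk : ∀ j < c, k + 1 ≤ lam.colLen j := by
    intro j hj
    have : (k, j) ∈ lam := YoungDiagram.mem_iff_lt_rowLen.mpr hj
    exact YoungDiagram.mem_iff_lt_colLen.mp this
  have hgmono : StrictMono g := by
    apply strictMono_nat_of_lt_succ
    intro j
    have h1 := lam.colLen_anti j (j+1) (by omega)
    have h2 := hcol0 j
    simp only [hg]
    omega
  have hβanti : ∀ t t', k < t → t < t' → t' ≤ D → β t' < β t := by
    intro t t' _ htt' ht'
    have h1 := lam.rowLen_anti t t' (by omega)
    simp only [hβ]
    omega
  have hrowanti : ∀ t, k < t → lam.rowLen t ≤ c := by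
    intro t ht
    exact hc ▸ lam.rowLen_anti k t (by omega)
  have hgb : ∀ j < c, g j < c + (D - k) := by
    intro j hj
    have h1 := hcolk j hj
    have h2 := hcol0 j
    simp only [hg]
    omega
  have hβb : ∀ t, k < t → t ≤ D → β t < c + (D - k) := by
    intro t ht htD
    have h1 := hrowanti t ht
    simp only [hβ]
    omega
  have hne : ∀ j < c, ∀ t, k < t → t ≤ D → g j ≠ β t := by
    intro j hj t ht htD
    have hiff : (t < lam.colLen j ↔ j < lam.rowLen t) := by
      rw [← YoungDiagram.mem_iff_lt_colLen, YoungDiagram.mem_iff_lt_rowLen]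
    have h1 := hcol0 j
    have h2 := hcolk j hj
    simp only [hg, hβ]
    omega
  set S1 := (range c).image g with hS1
  set S2 := ((Ioo k (D+1)).image β) with hS2
  have hinj1 : Set.InjOn g (range c) := hgmono.injective.injOn
  have hinj2 : Set.InjOn β (Ioo k (D+1)) := by
    intro t ht t' ht' hEq
    simp only [coe_Ioo, Set.mem_Ioo] at ht ht'
    by_contra hne'
    rcases Nat.lt_or_ge t t' with h | h
    · exact absurd hEq (Nat.ne_of_gt (hβanti t t' ht.1 h (by omega)))
    · exact absurd hEq.symm (Nat.ne_of_gt (hβanti t' t ht'.1 (by omega) (by omega)))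
  have hcard1 : S1.card = c := by
    rw [hS1, card_image_of_injOn hinj1, card_range]
  have hcard2 : S2.card = D - k := by
    rw [hS2, card_image_of_injOn hinj2, Nat.card_Ioo]
    omega
  have hsub : S1 ∪ S2 ⊆ range (c + (D - k)) := by
    intro x hx
    rw [mem_union] at hx
    rcases hx with hx | hx
    · rw [hS1, mem_image] at hx
      obtain ⟨j, hj, rfl⟩ := hx
      rw [mem_range] at hj ⊢
      exact hgb j hj
    · rw [hS2, mem_image] at hx
      obtain ⟨t, ht, rfl⟩ := hx
      rw [mem_Ioo] at ht
      rw [mem_range]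
      exact hβb t ht.1 (by omega)
  have hdisj : Disjoint S1 S2 := by
    rw [Finset.disjoint_left]
    intro x hx1 hx2
    rw [hS1, mem_image] at hx1
    rw [hS2, mem_image] at hx2
    obtain ⟨j, hj, rfl⟩ := hx1
    obtain ⟨t, ht, hEq⟩ := hx2
    rw [mem_range] at hj
    rw [mem_Ioo] at ht
    exact hne j hj t ht.1 (by omega) hEq.symm
  have hunion : S1 ∪ S2 = range (c + (D - k)) := by
    apply Finset.eq_of_subset_of_card_le hsub
    rw [card_union_of_disjoint hdisj, card_range, hcard1, hcard2]
  rw [← hunion, filter_union, card_union_of_disjoint (disjoint_filter_filter hdisj)]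
  congr 1
  · rw [hS1, Finset.filter_image, card_image_of_injOn (hinj1.mono (by
      intro x hx
      simp only [coe_filter, Set.mem_setOf_eq, coe_range, Set.mem_Iio] at hx ⊢
      exact mem_range.mp hx.1))]
  · rw [hS2, Finset.filter_image, card_image_of_injOn (hinj2.mono (by
      intro x hx
      simp only [coe_filter, Set.mem_setOf_eq, coe_Ioo, Set.mem_Ioo] at hx ⊢
      exact mem_Ioo.mp hx.1))]

/-- split a filter cardinality by an auxiliary predicate -/
lemma card_filter_split {α : Type*} (s : Finset α) (p q : α → Prop)
    [DecidablePred p] [DecidablePred q] :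
    (s.filter p).card = (s.filter (fun y => q y ∧ p y)).card
      + (s.filter (fun y => ¬ q y ∧ p y)).card := by
  have h1 : (s.filter p).filter q = s.filter (fun y => q y ∧ p y) := by
    rw [filter_filter]
    exact filter_congr (by intro x _; tauto)
  have h2 : (s.filter p).filter (fun y => ¬ q y) = s.filter (fun y => ¬ q y ∧ p y) := by
    rw [filter_filter]
    exact filter_congr (by intro x _; tauto)
  rw [← h1, ← h2, Finset.card_filter_add_card_filter_not]

lemma card_filter_or_disj {α : Type*} [DecidableEq α] (s : Finset α) (q a b : α → Prop)
    [DecidablePred q] [DecidablePred a] [DecidablePred b] :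
    (s.filter (fun y => (q y ∧ a y) ∨ (¬ q y ∧ b y))).card
    = (s.filter (fun y => q y ∧ a y)).card + (s.filter (fun y => ¬ q y ∧ b y)).card := by
  rw [filter_or, card_union_of_disjoint]
  rw [Finset.disjoint_left]
  intro x hx1 hx2
  rw [mem_filter] at hx1 hx2
  tauto

/-- transport a row filter to a range -/
lemma card_row_filter (μ : YoungDiagram) (k : ℕ) (q : ℕ × ℕ → Prop) [DecidablePred q] :
    (μ.cells.filter (fun y => y.1 = k ∧ q y)).card
      = ((range (μ.rowLen k)).filter (fun j => q (k, j))).card := by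
  have himg : μ.cells.filter (fun y => y.1 = k ∧ q y)
      = ((range (μ.rowLen k)).filter (fun j => q (k, j))).image (fun j => (k, j)) := by
    ext ⟨i, j⟩
    simp only [mem_filter, YoungDiagram.mem_cells, mem_image, mem_range]
    constructor
    · rintro ⟨hmem, rfl, hq⟩
      exact ⟨j, ⟨YoungDiagram.mem_iff_lt_rowLen.mp hmem, hq⟩, rfl⟩
    · rintro ⟨j', ⟨hj', hq⟩, heq⟩
      obtain ⟨rfl, rfl⟩ : k = i ∧ j' = j := by simpa [Prod.ext_iff] using heq
      exact ⟨YoungDiagram.mem_iff_lt_rowLen.mpr hj', rfl, hq⟩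
  rw [himg, card_image_of_injective _ (fun a b h => by simpa using h)]

lemma card_col_filter (μ : YoungDiagram) (c : ℕ) (q : ℕ × ℕ → Prop) [DecidablePred q] :
    (μ.cells.filter (fun y => y.2 = c ∧ q y)).card
      = ((range (μ.colLen c)).filter (fun i => q (i, c))).card := by
  have himg : μ.cells.filter (fun y => y.2 = c ∧ q y)
      = ((range (μ.colLen c)).filter (fun i => q (i, c))).image (fun i => (i, c)) := by
    ext ⟨i, j⟩
    simp only [mem_filter, YoungDiagram.mem_cells, mem_image, mem_range]
    constructor
    · rintro ⟨hmem, rfl, hq⟩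
      exact ⟨i, ⟨YoungDiagram.mem_iff_lt_colLen.mp hmem, hq⟩, rfl⟩
    · rintro ⟨i', ⟨hi', hq⟩, heq⟩
      obtain ⟨rfl, rfl⟩ : i' = i ∧ c = j := by simpa [Prod.ext_iff] using heq
      exact ⟨YoungDiagram.mem_iff_lt_colLen.mpr hi', rfl, hq⟩
  rw [himg, card_image_of_injective _ (fun a b h => by simpa using h)]

lemma card_filter_aff_split (μ : YoungDiagram) (k c : ℕ) (hx : (k, c) ∉ μ.cells)
    (q : ℕ × ℕ → Prop) [DecidablePred q] :
    (μ.cells.filter (fun y => (y.1 = k ∨ y.2 = c) ∧ q y)).card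
    = (μ.cells.filter (fun y => y.1 = k ∧ q y)).card
      + (μ.cells.filter (fun y => y.2 = c ∧ q y)).card := by
  have hu : μ.cells.filter (fun y => (y.1 = k ∨ y.2 = c) ∧ q y)
      = μ.cells.filter (fun y => y.1 = k ∧ q y) ∪ μ.cells.filter (fun y => y.2 = c ∧ q y) := by
    ext y
    simp only [mem_filter, mem_union]
    tauto
  rw [hu, card_union_of_disjoint]
  rw [Finset.disjoint_left]
  rintro ⟨i, j⟩ h1 h2
  rw [mem_filter] at h1 h2
  obtain ⟨hm, h1k, _⟩ := h1
  obtain ⟨_, h2c, _⟩ := h2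
  exact hx (by
    rw [show (k, c) = (i, j) from by rw [Prod.ext_iff]; exact ⟨h1k.symm, h2c.symm⟩]
    exact hm)
/-- Arm length of the (0-based) box `c`. -/
def armZ (μ : YoungDiagram) (c : ℕ × ℕ) : ℤ := (μ.rowLen c.1 : ℤ) - c.2 - 1

/-- Leg length of the (0-based) box `c`. -/
def legZ (μ : YoungDiagram) (c : ℕ × ℕ) : ℤ := (μ.colLen c.2 : ℤ) - c.1 - 1

/-- Hook length `h_λ(s) = a_λ(s) + ℓ_λ(s) + 1`. -/
def hookZ (μ : YoungDiagram) (c : ℕ × ℕ) : ℤ := armZ μ c + legZ μ c + 1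

/-- The monomial prefactor of the dual intertwiner:
`t*_λ = (-𝔮)^{-|λ|} 𝔮^{-#{s∈λ : h_λ(s)≡0 (mod n)}} ∏_{(i,j)∈λ, j≡0 (mod n)} (-𝔮 q1^j)`
(boxes are 1-based, so a 0-based cell `c` has column index `j = c.2 + 1`). -/
def tstar {R : Type*} [CommRing R] (n : ℕ) (qq q1 : Rˣ) (lam : YoungDiagram) : Rˣ :=
  (-qq) ^ (-(lam.cells.card : ℤ)) *
  qq ^ (-((lam.cells.filter (fun c => ((hookZ lam c : ZMod n) = 0))).card : ℤ)) *
  ∏ c ∈ lam.cells.filter (fun (c : ℕ × ℕ) => ((c.2 + 1 : ℕ) : ZMod n) = 0),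
    (-(qq * q1 ^ (c.2 + 1)))
set_option maxHeartbeats 1200000 in
/-- Recursion for `t*_λ` when a box of color `ℓ` is added in row `k` (0-based; the
1-based row index is `k+1`):
`t*_{λ+1_k} = t*_λ (-𝔮⁻¹) (-𝔮 q1^{λ_k+1})^e ∏_{1≤s≤ℓ(λ), s-λ_s≡ℓ} 𝔮 ∏_{1≤s≤ℓ(λ)+1, s≠k, s-λ_s≡ℓ+1} 𝔮⁻¹`,
where `e = 1` iff `λ_k + 1 ≡ 0 (mod n)`. -/
theorem tstar_recursion {R : Type*} [CommRing R] (n : ℕ) (hn : 2 ≤ n)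
    (qq q1 : Rˣ) (lam lam' : YoungDiagram) (k : ℕ) (ℓ : ℤ)
    (hadd : lam'.cells = insert (k, lam.rowLen k) lam.cells)
    (hcol : (ℓ : ZMod n) = (((k : ℤ) + 1 - (lam.rowLen k : ℤ) - 1 : ℤ) : ZMod n)) :
    tstar n qq q1 lam'
    = tstar n qq q1 lam * (-qq⁻¹) *
      (if ((lam.rowLen k + 1 : ℕ) : ZMod n) = 0 then -(qq * q1 ^ (lam.rowLen k + 1)) else 1) *
      (∏ s ∈ (Finset.range (lam.colLen 0)).filter
          (fun (s : ℕ) => ((((s : ℤ) + 1 - (lam.rowLen s : ℤ) : ℤ) : ZMod n) = (ℓ : ZMod n))),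
        qq) *
      (∏ s ∈ (Finset.range (lam.colLen 0 + 1)).filter
          (fun (s : ℕ) => s ≠ k ∧
            ((((s : ℤ) + 1 - (lam.rowLen s : ℤ) : ℤ) : ZMod n) = (ℓ : ZMod n) + 1)),
        qq⁻¹) := by
  haveI : Fact (1 < n) := ⟨hn⟩
  have h1ne : (1 : ZMod n) ≠ 0 := one_ne_zero
  set c := lam.rowLen k with hc
  set D := lam.colLen 0 with hD
  -- ## basic facts about the added box
  have hxnot : (k, c) ∉ lam := by
    rw [YoungDiagram.mem_iff_lt_rowLen]; omega
  have hxcells : (k, c) ∉ lam.cells := by rwa [YoungDiagram.mem_cells]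
  have hmem' : ∀ y : ℕ × ℕ, y ∈ lam' ↔ y = (k, c) ∨ y ∈ lam := by
    intro y
    rw [← YoungDiagram.mem_cells, hadd, Finset.mem_insert, YoungDiagram.mem_cells]
  have hxmem' : (k, c) ∈ lam' := (hmem' _).mpr (Or.inl rfl)
  have hkD : k ≤ D := by
    rcases Nat.eq_zero_or_pos k with hk0 | hk0
    · omega
    · have h1 : (k - 1, c) ∈ lam' := lam'.up_left_mem (by omega) le_rfl hxmem'
      have h2 : (k - 1, c) ∈ lam := by
        rcases (hmem' _).mp h1 with h | h
        · exact absurd (Prod.ext_iff.mp h).1 (by omega)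
        · exact h
      have h3 : (k - 1, 0) ∈ lam := lam.up_left_mem le_rfl (Nat.zero_le c) h2
      have := YoungDiagram.mem_iff_lt_colLen.mp h3
      omega
  have hcolc : lam.colLen c = k := by
    apply colLen_eq_of
    intro i
    constructor
    · intro h
      by_contra hik
      push_neg at hik
      exact hxnot (lam.up_left_mem hik le_rfl h)
    · intro hik
      have h1 : (i, c) ∈ lam' := lam'.up_left_mem (by omega) le_rfl hxmem'
      rcases (hmem' _).mp h1 with h | h
      · exact absurd (Prod.ext_iff.mp h).1 (by omega)
      · exact h
  have hrowk' : lam'.rowLen k = c + 1 := by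
    apply rowLen_eq_of
    intro j
    rw [hmem' (k, j)]
    constructor
    · rintro (h | h)
      · have : j = c := (Prod.ext_iff.mp h).2
        omega
      · have := YoungDiagram.mem_iff_lt_rowLen.mp h
        omega
    · intro hj
      rcases Nat.lt_or_ge j c with h | h
      · exact Or.inr (YoungDiagram.mem_iff_lt_rowLen.mpr (by omega))
      · exact Or.inl (by rw [Prod.ext_iff]; exact ⟨rfl, by omega⟩)
  have hrowne' : ∀ i, i ≠ k → lam'.rowLen i = lam.rowLen i := by
    intro i hik
    apply rowLen_eq_of
    intro j
    rw [hmem' (i, j)]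
    constructor
    · rintro (h | h)
      · exact absurd (Prod.ext_iff.mp h).1 hik
      · exact YoungDiagram.mem_iff_lt_rowLen.mp h
    · intro h
      exact Or.inr (YoungDiagram.mem_iff_lt_rowLen.mpr h)
  have hcolc' : lam'.colLen c = k + 1 := by
    apply colLen_eq_of
    intro i
    rw [hmem' (i, c)]
    constructor
    · rintro (h | h)
      · have : i = k := (Prod.ext_iff.mp h).1
        omega
      · have := YoungDiagram.mem_iff_lt_colLen.mp h
        omega
    · intro hi
      rcases Nat.lt_or_ge i k with h | h
      · exact Or.inr (by rw [YoungDiagram.mem_iff_lt_colLen, hcolc]; omega)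
      · exact Or.inl (by rw [Prod.ext_iff]; exact ⟨by omega, rfl⟩)
  have hcolne' : ∀ j, j ≠ c → lam'.colLen j = lam.colLen j := by
    intro j hjc
    apply colLen_eq_of
    intro i
    rw [hmem' (i, j)]
    constructor
    · rintro (h | h)
      · exact absurd (Prod.ext_iff.mp h).2 hjc
      · exact YoungDiagram.mem_iff_lt_colLen.mp h
    · intro h
      exact Or.inr (YoungDiagram.mem_iff_lt_colLen.mpr h)
  have hcol0 : ∀ j, lam.colLen j ≤ D := by
    intro j
    have := lam.colLen_anti 0 j (Nat.zero_le j)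
    omega
  have hcolkj : ∀ j < c, k + 1 ≤ lam.colLen j := by
    intro j hj
    have : (k, j) ∈ lam := YoungDiagram.mem_iff_lt_rowLen.mpr (by omega)
    exact YoungDiagram.mem_iff_lt_colLen.mp this
  have hrowD : lam.rowLen D = 0 := by
    apply rowLen_eq_of
    intro j
    constructor
    · intro h
      have h0 : (D, 0) ∈ lam := lam.up_left_mem le_rfl (Nat.zero_le j) h
      have := YoungDiagram.mem_iff_lt_colLen.mp h0
      omega
    · omega
  set b := c + (D - k) with hb
  set r0 : ZMod n := ((b : ℕ) : ZMod n) with hr0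
  -- ## hook values
  have hookx : hookZ lam' (k, c) = 1 := by
    simp only [hookZ, armZ, legZ, hrowk', hcolc']
    push_cast
    ring
  have hookrow' : ∀ i j, (i, j) ∈ lam →
      hookZ lam' (i, j) = hookZ lam (i, j) + (if i = k ∨ j = c then 1 else 0) := by
    intro i j hmem
    by_cases hik : i = k
    · subst hik
      have hjc : j < c := by
        have := YoungDiagram.mem_iff_lt_rowLen.mp hmem
        omega
      rw [if_pos (Or.inl rfl)]
      simp only [hookZ, armZ, legZ, hrowk', hcolne' j (by omega)]
      push_cast
      ring
    · by_cases hjc : j = c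
      · subst hjc
        rw [if_pos (Or.inr rfl)]
        simp only [hookZ, armZ, legZ, hrowne' i hik, hcolc', hcolc]
        push_cast
        ring
      · rw [if_neg (by tauto)]
        simp only [hookZ, armZ, legZ, hrowne' i hik, hcolne' j hjc]
        ring
  -- ## E1 : transport of the hook-count to lam
  have E1 : (lam'.cells.filter (fun y => ((hookZ lam' y : ZMod n) = 0))).card
      = (lam.cells.filter (fun y =>
          ((y.1 = k ∨ y.2 = c) ∧ ((hookZ lam y : ZMod n) = -1))
          ∨ (¬(y.1 = k ∨ y.2 = c) ∧ ((hookZ lam y : ZMod n) = 0)))).card := by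
    rw [hadd, filter_insert, if_neg (by rw [hookx]; push_cast; exact h1ne)]
    apply congrArg
    apply filter_congr
    rintro ⟨i, j⟩ hy
    rw [YoungDiagram.mem_cells] at hy
    rw [hookrow' i j hy]
    by_cases haffy : i = k ∨ j = c
    · rw [if_pos haffy]
      push_cast
      constructor
      · intro h
        exact Or.inl ⟨haffy, by linear_combination h⟩
      · rintro (⟨_, h⟩ | ⟨hn', _⟩)
        · linear_combination h
        · exact absurd haffy hn'
    · rw [if_neg haffy]
      push_cast
      constructor
      · intro h
        exact Or.inr ⟨haffy, by linear_combination h⟩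
      · rintro (⟨ha, _⟩ | ⟨_, h⟩)
        · exact absurd ha haffy
        · linear_combination h
  -- ## E2 : split by affected cells
  have E2a : (lam.cells.filter (fun y =>
          ((y.1 = k ∨ y.2 = c) ∧ ((hookZ lam y : ZMod n) = -1))
          ∨ (¬(y.1 = k ∨ y.2 = c) ∧ ((hookZ lam y : ZMod n) = 0)))).card
      = (lam.cells.filter (fun y => (y.1 = k ∨ y.2 = c) ∧ ((hookZ lam y : ZMod n) = -1))).card
        + (lam.cells.filter (fun y => ¬(y.1 = k ∨ y.2 = c) ∧ ((hookZ lam y : ZMod n) = 0))).card :=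
    card_filter_or_disj _ _ _ _
  have E2b : (lam.cells.filter (fun y => ((hookZ lam y : ZMod n) = 0))).card
      = (lam.cells.filter (fun y => (y.1 = k ∨ y.2 = c) ∧ ((hookZ lam y : ZMod n) = 0))).card
        + (lam.cells.filter (fun y => ¬(y.1 = k ∨ y.2 = c) ∧ ((hookZ lam y : ZMod n) = 0))).card :=
    card_filter_split _ _ _
  -- ## E3 : split affected cells into row and column parts
  have E3a : (lam.cells.filter (fun y => (y.1 = k ∨ y.2 = c) ∧ ((hookZ lam y : ZMod n) = 0))).card
      = ((range c).filter (fun j => ((hookZ lam (k, j) : ZMod n) = 0))).card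
        + ((range k).filter (fun i => ((hookZ lam (i, c) : ZMod n) = 0))).card := by
    rw [card_filter_aff_split lam k c hxcells, card_row_filter, card_col_filter, hcolc, ← hc]
  have E3b : (lam.cells.filter (fun y => (y.1 = k ∨ y.2 = c) ∧ ((hookZ lam y : ZMod n) = -1))).card
      = ((range c).filter (fun j => ((hookZ lam (k, j) : ZMod n) = -1))).card
        + ((range k).filter (fun i => ((hookZ lam (i, c) : ZMod n) = -1))).card := by
    rw [card_filter_aff_split lam k c hxcells, card_row_filter, card_col_filter, hcolc, ← hc]
  -- ## hook-value formulas on the affected row and column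
  have hookrowj : ∀ j < c, (hookZ lam (k, j) : ℤ)
      = (b : ℤ) - ((j + (D + 1 - lam.colLen j) : ℕ) : ℤ) := by
    intro j hj
    have h1 := hcolkj j hj
    have h2 := hcol0 j
    simp only [hookZ, armZ, legZ]
    omega
  have hookcoli : ∀ i < k, (hookZ lam (i, c) : ℤ)
      = ((lam.rowLen i + (D - i) : ℕ) : ℤ) - (b : ℤ) - 1 := by
    intro i hi
    simp only [hookZ, armZ, legZ, hcolc]
    omega
  -- ## convert to residue conditions
  have cvRow0 : ((range c).filter (fun j => ((hookZ lam (k, j) : ZMod n) = 0))).card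
      = ((range c).filter (fun j => (((j + (D + 1 - lam.colLen j) : ℕ)) : ZMod n) = r0)).card := by
    apply congrArg
    apply filter_congr
    intro j hj
    rw [mem_range] at hj
    rw [hookrowj j hj, hr0]
    push_cast
    constructor
    · intro h; linear_combination -h
    · intro h; linear_combination -h
  have cvRow1 : ((range c).filter (fun j => ((hookZ lam (k, j) : ZMod n) = -1))).card
      = ((range c).filter (fun j => (((j + (D + 1 - lam.colLen j) : ℕ)) : ZMod n) = r0 + 1)).card := by
    apply congrArg
    apply filter_congr
    intro j hj
    rw [mem_range] at hj
    rw [hookrowj j hj, hr0]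
    push_cast
    constructor
    · intro h; linear_combination -h
    · intro h; linear_combination -h
  have cvCol0 : ((range k).filter (fun i => ((hookZ lam (i, c) : ZMod n) = 0))).card
      = ((range k).filter (fun t => (((lam.rowLen t + (D - t) : ℕ)) : ZMod n) = r0 + 1)).card := by
    apply congrArg
    apply filter_congr
    intro i hi
    rw [mem_range] at hi
    rw [hookcoli i hi, hr0]
    push_cast
    constructor
    · intro h; linear_combination h
    · intro h; linear_combination h
  have cvCol1 : ((range k).filter (fun i => ((hookZ lam (i, c) : ZMod n) = -1))).card
      = ((range k).filter (fun t => (((lam.rowLen t + (D - t) : ℕ)) : ZMod n) = r0)).card := by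
    apply congrArg
    apply filter_congr
    intro i hi
    rw [mem_range] at hi
    rw [hookcoli i hi, hr0]
    push_cast
    constructor
    · intro h; linear_combination h
    · intro h; linear_combination h
  -- ## the single-row hook partition
  have L1a := row_hook_partition lam k (by omega) (fun x => ((x : ℕ) : ZMod n) = r0)
  have L1b := row_hook_partition lam k (by omega) (fun x => ((x : ℕ) : ZMod n) = r0 + 1)
  rw [← hc, ← hD, ← hb] at L1a L1b
  -- ## the shift identity
  have E6 : ((range b).filter (fun x => ((x : ℕ) : ZMod n) = r0 + 1)).card
      = ((range b).filter (fun x => ((x : ℕ) : ZMod n) = r0)).card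
        + (if r0 + 1 = (0 : ZMod n) then 1 else 0) := by
    have h := count_shift n b r0
    rw [range_add_one, filter_insert, if_neg (by
      intro hcon
      rw [← hr0] at hcon
      exact h1ne (by linear_combination -hcon))] at h
    exact h
  -- ## reassembling the row counts (E7 and E8)
  have hdis : Disjoint (range k) (Ioo k (D + 1)) := by
    rw [Finset.disjoint_left]
    intro x hx1 hx2
    rw [mem_range] at hx1
    rw [mem_Ioo] at hx2
    omega
  have E7 : ((range (D + 1)).filter
        (fun s => s ≠ k ∧ (((lam.rowLen s + (D - s) : ℕ)) : ZMod n) = r0)).card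
      = ((range k).filter (fun t => (((lam.rowLen t + (D - t) : ℕ)) : ZMod n) = r0)).card
        + ((Ioo k (D + 1)).filter (fun t => (((lam.rowLen t + (D - t) : ℕ)) : ZMod n) = r0)).card := by
    have hsplit : (range (D + 1)).filter
          (fun s => s ≠ k ∧ (((lam.rowLen s + (D - s) : ℕ)) : ZMod n) = r0)
        = (range k).filter (fun t => (((lam.rowLen t + (D - t) : ℕ)) : ZMod n) = r0)
          ∪ (Ioo k (D + 1)).filter (fun t => (((lam.rowLen t + (D - t) : ℕ)) : ZMod n) = r0) := by
      ext x
      simp only [mem_filter, mem_union, mem_range, mem_Ioo]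
      constructor
      · rintro ⟨hx, hxk, hcond⟩
        rcases Nat.lt_or_ge x k with h | h
        · exact Or.inl ⟨h, hcond⟩
        · exact Or.inr ⟨⟨by omega, by omega⟩, hcond⟩
      · rintro (⟨h, hcond⟩ | ⟨⟨h1, h2⟩, hcond⟩)
        · exact ⟨by omega, by omega, hcond⟩
        · exact ⟨by omega, by omega, hcond⟩
    rw [hsplit, card_union_of_disjoint (disjoint_filter_filter hdis)]
  have hβk : (lam.rowLen k + (D - k) : ℕ) = b := by omega
  have hpβk : ¬ ((((lam.rowLen k + (D - k) : ℕ)) : ZMod n) = r0 + 1) := by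
    rw [hβk, ← hr0]
    intro hcon
    exact h1ne (by linear_combination -hcon)
  have E8 : ((range k).filter (fun t => (((lam.rowLen t + (D - t) : ℕ)) : ZMod n) = r0 + 1)).card
        + ((Ioo k (D + 1)).filter (fun t => (((lam.rowLen t + (D - t) : ℕ)) : ZMod n) = r0 + 1)).card
      = ((range D).filter (fun s => (((lam.rowLen s + (D - s) : ℕ)) : ZMod n) = r0 + 1)).card
        + (if r0 + 1 = (0 : ZMod n) then 1 else 0) := by
    have hpβD : ((((lam.rowLen D + (D - D) : ℕ)) : ZMod n) = r0 + 1) ↔ (r0 + 1 = (0 : ZMod n)) := by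
      rw [hrowD]
      simp only [Nat.sub_self, Nat.add_zero, Nat.cast_zero]
      exact eq_comm
    rcases Nat.lt_or_ge k D with hkD' | hkD'
    · have hIoo : Ioo k (D + 1) = insert D (Ioo k D) := by
        ext x
        simp only [mem_Ioo, mem_insert]
        omega
      have hrD : range D = insert k ((range k) ∪ Ioo k D) := by
        ext x
        simp only [mem_range, mem_insert, mem_union, mem_Ioo]
        omega
      have hdis2 : Disjoint (range k) (Ioo k D) := by
        rw [Finset.disjoint_left]
        intro x hx1 hx2
        rw [mem_range] at hx1
        rw [mem_Ioo] at hx2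
        omega
      rw [hIoo, filter_insert, hrD, filter_insert, if_neg hpβk, filter_union,
        card_union_of_disjoint (disjoint_filter_filter hdis2)]
      by_cases hcase : r0 + 1 = (0 : ZMod n)
      · rw [if_pos (hpβD.mpr hcase), if_pos hcase,
          card_insert_of_notMem (by
            rw [mem_filter, mem_Ioo]
            intro hcon
            exact absurd hcon.1.2 (lt_irrefl D))]
        omega
      · rw [if_neg (fun hh => hcase (hpβD.mp hh)), if_neg hcase]
        omega
    · have hkDeq : k = D := by omega
      have hIoo : Ioo k (D + 1) = ∅ := by
        ext x
        simp only [mem_Ioo, notMem_empty, iff_false]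
        omega
      have hcz : c = 0 := by
        rw [hc, hkDeq, hrowD]
      have hbz : r0 + 1 ≠ 0 := by
        have hbz' : b = 0 := by omega
        rw [hr0, hbz']
        simpa using h1ne
      rw [hIoo, filter_empty, card_empty, if_neg hbz, hkDeq]
  -- ## translate the theorem's residue conditions
  have hlZ : (ℓ : ZMod n) = (k : ZMod n) - (c : ZMod n) := by
    rw [hcol]
    push_cast
    ring
  have hr0cast : r0 = (c : ZMod n) + (D : ZMod n) - (k : ZMod n) := by
    rw [hr0, hb]
    push_cast [Nat.cast_sub hkD]
    ring
  have SA : ((range D).filter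
        (fun (s : ℕ) => ((((s : ℤ) + 1 - (lam.rowLen s : ℤ) : ℤ) : ZMod n) = (ℓ : ZMod n)))).card
      = ((range D).filter (fun s => (((lam.rowLen s + (D - s) : ℕ)) : ZMod n) = r0 + 1)).card := by
    apply congrArg
    apply filter_congr
    intro s hs
    rw [mem_range] at hs
    have hcast : (((lam.rowLen s + (D - s) : ℕ)) : ZMod n)
        = (lam.rowLen s : ZMod n) + (D : ZMod n) - (s : ZMod n) := by
      rw [Nat.cast_add, Nat.cast_sub (show s ≤ D by omega)]
      ring
    rw [hlZ, hcast, hr0cast]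
    push_cast
    constructor
    · intro h; linear_combination -h
    · intro h; linear_combination -h
  have SB : ((range (D + 1)).filter
        (fun (s : ℕ) => s ≠ k ∧ ((((s : ℤ) + 1 - (lam.rowLen s : ℤ) : ℤ) : ZMod n) = (ℓ : ZMod n) + 1))).card
      = ((range (D + 1)).filter
        (fun s => s ≠ k ∧ (((lam.rowLen s + (D - s) : ℕ)) : ZMod n) = r0)).card := by
    apply congrArg
    apply filter_congr
    intro s hs
    rw [mem_range] at hs
    have hcast : (((lam.rowLen s + (D - s) : ℕ)) : ZMod n)
        = (lam.rowLen s : ZMod n) + (D : ZMod n) - (s : ZMod n) := by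
      rw [Nat.cast_add, Nat.cast_sub (show s ≤ D by omega)]
      ring
    rw [hlZ, hcast, hr0cast]
    push_cast
    constructor
    · rintro ⟨h1, h2⟩
      exact ⟨h1, by linear_combination -h2⟩
    · rintro ⟨h1, h2⟩
      exact ⟨h1, by linear_combination -h2⟩
  -- ## the key counting identity
  have E9 : (lam'.cells.filter (fun y => ((hookZ lam' y : ZMod n) = 0))).card
        + ((range D).filter
          (fun (s : ℕ) => ((((s : ℤ) + 1 - (lam.rowLen s : ℤ) : ℤ) : ZMod n) = (ℓ : ZMod n)))).card
      = (lam.cells.filter (fun y => ((hookZ lam y : ZMod n) = 0))).card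
        + ((range (D + 1)).filter
          (fun (s : ℕ) => s ≠ k ∧ ((((s : ℤ) + 1 - (lam.rowLen s : ℤ) : ℤ) : ZMod n) = (ℓ : ZMod n) + 1))).card := by
    omega
  -- ## final assembly
  have hcard' : lam'.cells.card = lam.cells.card + 1 := by
    rw [hadd, card_insert_of_notMem hxcells]
  have hcolprod : (∏ y ∈ lam'.cells.filter
        (fun (y : ℕ × ℕ) => ((y.2 + 1 : ℕ) : ZMod n) = 0), (-(qq * q1 ^ (y.2 + 1))))
      = (if ((c + 1 : ℕ) : ZMod n) = 0 then -(qq * q1 ^ (c + 1)) else 1)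
        * ∏ y ∈ lam.cells.filter
          (fun (y : ℕ × ℕ) => ((y.2 + 1 : ℕ) : ZMod n) = 0), (-(qq * q1 ^ (y.2 + 1))) := by
    rw [hadd, filter_insert]
    by_cases hcc : ((c + 1 : ℕ) : ZMod n) = 0
    · rw [if_pos hcc, if_pos hcc, prod_insert (by
        rw [mem_filter]
        exact fun hcon => hxcells hcon.1)]
    · rw [if_neg hcc, if_neg hcc, one_mul]
  simp only [tstar]
  rw [hcard', hcolprod, prod_const, prod_const]
  have hz1 : (-((lam.cells.card + 1 : ℕ) : ℤ)) = (-(lam.cells.card : ℤ)) + (-1) := by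
    push_cast
    ring
  have hz2 : -(((lam'.cells.filter (fun y => ((hookZ lam' y : ZMod n) = 0))).card : ℤ))
      = -(((lam.cells.filter (fun y => ((hookZ lam y : ZMod n) = 0))).card : ℤ))
        + ((((range D).filter
          (fun (s : ℕ) => ((((s : ℤ) + 1 - (lam.rowLen s : ℤ) : ℤ) : ZMod n) = (ℓ : ZMod n)))).card : ℤ))
        + -((((range (D + 1)).filter
          (fun (s : ℕ) => s ≠ k ∧ ((((s : ℤ) + 1 - (lam.rowLen s : ℤ) : ℤ) : ZMod n) = (ℓ : ZMod n) + 1))).card : ℤ)) := by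
    omega
  rw [hz1, hz2, zpow_add, zpow_add, zpow_add, zpow_neg_one, inv_neg]
  simp only [zpow_neg, zpow_natCast, ← inv_pow]
  simp only [mul_comm, mul_left_comm, mul_assoc]
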